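/- Let U ⊆ ℝ² be open, and let u, ψ : U → ℝ be C² functions such that the expression Δ := ψ² − u_x·ψ − (u_y + y) is nonzero at every point of U and such that ψ_x = −1/Δ and ψ_y = (u_x − ψ)/Δ hold on all of U. Then u satisfies u_yy = (u_y + y)·u_xx − u_x·u_xy − 2 at every point of U. -/

import Mathlib

/-!
Write `Δ = ψ² - u_x ψ - (u_y + y)`. The covering equations say `ψ_x Δ = -1` and
`ψ_y Δ = u_x - ψ` on `U`. Differentiating the first in `y`, the second in `x`, and
subtracting, the mixed derivatives `ψ_xy = ψ_yx` cancel; multiplying the result by `Δ` and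
using the two equations once more to eliminate `ψ_x` and `ψ_y` leaves exactly equation (2).
-/

/-- Partial derivative of `f : ℝ² → ℝ` in the direction `v`. -/
noncomputable def pd2 (v : ℝ × ℝ) (f : ℝ × ℝ → ℝ) : ℝ × ℝ → ℝ :=
  fun p => fderiv ℝ f p v

noncomputable def dx : (ℝ × ℝ → ℝ) → ℝ × ℝ → ℝ := pd2 (1, 0)
noncomputable def dy : (ℝ × ℝ → ℝ) → ℝ × ℝ → ℝ := pd2 (0, 1)

open Filter Topology

section PartialDerivatives

variable {f g k : ℝ × ℝ → ℝ} {p : ℝ × ℝ}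

lemma differentiableAt_pd2 (hf : ContDiffAt ℝ 2 f p) (v : ℝ × ℝ) :
    DifferentiableAt ℝ (pd2 v f) p :=
  ((hf.fderiv_right (by norm_num)).differentiableAt one_ne_zero).clm_apply
    (differentiableAt_const v)

lemma pd2_pd2_comm (hf : ContDiffAt ℝ 2 f p) (v w : ℝ × ℝ) :
    pd2 w (pd2 v f) p = pd2 v (pd2 w f) p := by
  have hd : DifferentiableAt ℝ (fderiv ℝ f) p :=
    (hf.fderiv_right (by norm_num)).differentiableAt one_ne_zero
  have hsymm : IsSymmSndFDerivAt ℝ f p := hf.isSymmSndFDerivAt (by simp)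
  change fderiv ℝ (fun q => fderiv ℝ f q v) p w = fderiv ℝ (fun q => fderiv ℝ f q w) p v
  rw [fderiv_clm_apply hd (differentiableAt_const v),
    fderiv_clm_apply hd (differentiableAt_const w)]
  simp [hsymm w v]

lemma pd2_mul_of_eventuallyEq (hf : DifferentiableAt ℝ f p) (hg : DifferentiableAt ℝ g p)
    (h : (fun q => f q * g q) =ᶠ[𝓝 p] k) (v : ℝ × ℝ) :
    f p * pd2 v g p + g p * pd2 v f p = pd2 v k p := by
  change _ = fderiv ℝ k p v
  rw [← h.fderiv_eq, fderiv_fun_mul hf hg]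
  rfl

lemma pd2_const (c : ℝ) (v : ℝ × ℝ) : pd2 v (fun _ => c) p = 0 := by
  simp [pd2]

lemma pd2_sub (hf : DifferentiableAt ℝ f p) (hg : DifferentiableAt ℝ g p) (v : ℝ × ℝ) :
    pd2 v (f - g) p = pd2 v f p - pd2 v g p := by
  simp [pd2, fderiv_sub hf hg]

end PartialDerivatives

noncomputable def coveringDelta (u ψ : ℝ × ℝ → ℝ) : ℝ × ℝ → ℝ :=
  fun q => ψ q ^ 2 - dx u q * ψ q - (dy u q + q.2)

section CoveringDelta

variable {u ψ : ℝ × ℝ → ℝ} {p : ℝ × ℝ}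

lemma hasFDerivAt_coveringDelta (hu : ContDiffAt ℝ 2 u p) (hψ : DifferentiableAt ℝ ψ p) :
    HasFDerivAt (coveringDelta u ψ)
      ((2 * ψ p) • fderiv ℝ ψ p - (ψ p • fderiv ℝ (dx u) p + dx u p • fderiv ℝ ψ p)
        - (fderiv ℝ (dy u) p + ContinuousLinearMap.snd ℝ ℝ ℝ)) p := by
  have hψ' := hψ.hasFDerivAt
  have hux : HasFDerivAt (dx u) (fderiv ℝ (dx u) p) p :=
    (differentiableAt_pd2 hu (1, 0)).hasFDerivAt
  have huy : HasFDerivAt (dy u) (fderiv ℝ (dy u) p) p :=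
    (differentiableAt_pd2 hu (0, 1)).hasFDerivAt
  refine (((hψ'.pow 2).fun_sub (hux.fun_mul hψ')).fun_sub
    (huy.fun_add hasFDerivAt_snd)).congr_fderiv ?_
  ext <;> simp <;> ring

lemma pd2_coveringDelta (hu : ContDiffAt ℝ 2 u p) (hψ : DifferentiableAt ℝ ψ p)
    (v : ℝ × ℝ) :
    pd2 v (coveringDelta u ψ) p =
      2 * ψ p * pd2 v ψ p - (ψ p * pd2 v (dx u) p + dx u p * pd2 v ψ p)
        - (pd2 v (dy u) p + v.2) := by
  change fderiv ℝ _ p v = _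
  rw [(hasFDerivAt_coveringDelta hu hψ).fderiv]
  rfl

end CoveringDelta

theorem covering_implies_eq2 (U : Set (ℝ × ℝ)) (hU : IsOpen U)
    (u ψ : ℝ × ℝ → ℝ) (hu : ContDiffOn ℝ 2 u U) (hψ : ContDiffOn ℝ 2 ψ U)
    (hΔ : ∀ p ∈ U, ψ p ^ 2 - dx u p * ψ p - (dy u p + p.2) ≠ 0)
    (hx : ∀ p ∈ U, dx ψ p = -1 / (ψ p ^ 2 - dx u p * ψ p - (dy u p + p.2)))
    (hy : ∀ p ∈ U,
      dy ψ p = (dx u p - ψ p) / (ψ p ^ 2 - dx u p * ψ p - (dy u p + p.2))) :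
    ∀ p ∈ U,
      dy (dy u) p = (dy u p + p.2) * dx (dx u) p - dx u p * dx (dy u) p - 2 := by
  intro p hp
  have hpU : U ∈ 𝓝 p := hU.mem_nhds hp
  have hu2 := hu.contDiffAt hpU
  have hψ2 := hψ.contDiffAt hpU
  have hψd : DifferentiableAt ℝ ψ p := hψ2.differentiableAt (by norm_num)
  have hΔx := pd2_coveringDelta hu2 hψd (1, 0)
  have hΔy := pd2_coveringDelta hu2 hψd (0, 1)
  have hΔd := (hasFDerivAt_coveringDelta hu2 hψd).differentiableAt
  set Δ := coveringDelta u ψ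
  have hxΔ : ∀ q ∈ U, dx ψ q * Δ q = -1 := fun q hq => by
    rw [hx q hq]; exact div_mul_cancel₀ _ (hΔ q hq)
  have hyΔ : ∀ q ∈ U, dy ψ q * Δ q = dx u q - ψ q := fun q hq => by
    rw [hy q hq]; exact div_mul_cancel₀ _ (hΔ q hq)
  have hxΔ_dy := pd2_mul_of_eventuallyEq (differentiableAt_pd2 hψ2 (1, 0)) hΔd
    (eventually_of_mem hpU hxΔ) (0, 1)
  have hyΔ_dx := pd2_mul_of_eventuallyEq (differentiableAt_pd2 hψ2 (0, 1)) hΔd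
    (eventually_of_mem hpU hyΔ : _ =ᶠ[𝓝 p] dx u - ψ) (1, 0)
  rw [pd2_const] at hxΔ_dy
  rw [pd2_sub (f := dx u) (differentiableAt_pd2 hu2 (1, 0)) hψd] at hyΔ_dx
  have hΔp : Δ p = ψ p ^ 2 - dx u p * ψ p - (dy u p + p.2) := rfl
  simp only [dx, dy] at *
  rw [pd2_pd2_comm hψ2] at hxΔ_dy
  rw [pd2_pd2_comm hu2] at hΔy
  linear_combination Δ p * hxΔ_dy - Δ p * hyΔ_dx - Δ p * pd2 (1, 0) ψ p * hΔy
    + Δ p * pd2 (0, 1) ψ p * hΔx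
    + (ψ p * pd2 (1, 0) (pd2 (0, 1) u) p + pd2 (0, 1) (pd2 (0, 1) u) p + 2) * hxΔ p hp
    - (ψ p * pd2 (1, 0) (pd2 (1, 0) u) p + pd2 (1, 0) (pd2 (0, 1) u) p) * hyΔ p hp
    - pd2 (1, 0) (pd2 (1, 0) u) p * hΔp
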